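/- arXiv:2509.22133 — 2 statements merged into one kernel-verified Lean document; each statement's English description precedes it below -/
import Mathlib

section
/- Gaussian elimination for two-term complexes: let A be an additive category (e.g. R-modules) and consider a two-term complex C = (X ⊕ D⁰ → Y ⊕ D¹) whose differential has matrix components ψ : X → Y, d : D⁰ → Y, e : X → D¹, c : D⁰ → D¹, with ψ an isomorphism. Then C is chain homotopy equivalent to the two-term complex D = (D⁰ → D¹) with differential c − e ∘ ψ^{−1} ∘ d. -/
open CategoryTheory Limits

/-- **Gaussian elimination.** In an additive category, consider the
two-term complex `X ⊞ D⁰ → Y ⊞ D¹` whose differential has matrix components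
`ψ : X ⟶ Y` (an isomorphism), `d : D⁰ ⟶ Y`, `e : X ⟶ D¹`, `c : D⁰ ⟶ D¹`.  Then it is
chain homotopy equivalent to the two-term complex `D⁰ → D¹` with differential
`c - e ∘ ψ⁻¹ ∘ d`, via the explicit projection `((0 1), (−eψ⁻¹ 1))`, inclusion
`((−ψ⁻¹d 1)ᵀ, (0 1)ᵀ)` and a homotopy `h`. -/
theorem stmt15 {C : Type*} [Category C] [Preadditive C] [HasBinaryBiproducts C]
    (X D0 Y D1 : C) (ψ : X ≅ Y) (d : D0 ⟶ Y) (e : X ⟶ D1) (c : D0 ⟶ D1) :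
    ∃ (f₀ : X ⊞ D0 ⟶ D0) (f₁ : Y ⊞ D1 ⟶ D1) (g₀ : D0 ⟶ X ⊞ D0) (g₁ : D1 ⟶ Y ⊞ D1)
      (h : Y ⊞ D1 ⟶ X ⊞ D0),
      -- the differentials
      ∀ (Dm : X ⊞ D0 ⟶ Y ⊞ D1) (c' : D0 ⟶ D1),
        Dm = biprod.desc (biprod.lift ψ.hom e) (biprod.lift d c) →
        c' = c - d ≫ ψ.inv ≫ e →
        -- explicit projection and inclusion
        f₀ = biprod.snd ∧
        f₁ = biprod.desc (-(ψ.inv ≫ e)) (𝟙 D1) ∧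
        g₀ = biprod.lift (-(d ≫ ψ.inv)) (𝟙 D0) ∧
        g₁ = biprod.inr ∧
        -- chain map conditions
        Dm ≫ f₁ = f₀ ≫ c' ∧
        g₀ ≫ Dm = c' ≫ g₁ ∧
        -- f ∘ g = id on (D⁰ → D¹)
        g₀ ≫ f₀ = 𝟙 D0 ∧
        g₁ ≫ f₁ = 𝟙 D1 ∧
        -- g ∘ f ≃ id via the homotopy h
        f₀ ≫ g₀ - 𝟙 (X ⊞ D0) = Dm ≫ h ∧
        f₁ ≫ g₁ - 𝟙 (Y ⊞ D1) = h ≫ Dm := by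
  refine ⟨biprod.snd, biprod.desc (-(ψ.inv ≫ e)) (𝟙 D1),
    biprod.lift (-(d ≫ ψ.inv)) (𝟙 D0), biprod.inr,
    -(biprod.fst ≫ ψ.inv ≫ biprod.inl), ?_⟩
  rintro Dm c' rfl rfl
  refine ⟨rfl, rfl, rfl, rfl, ?_, ?_, ?_, ?_, ?_, ?_⟩ <;>
    (try ext) <;> simp [Preadditive.sub_comp, Preadditive.comp_sub, sub_eq_neg_add, add_comm]
end

section
/- Let C be a monoidal category and (P, ε) a pair with P an object and ε : P → 𝟙 a morphism such that ε ⊗ id_P : P ⊗ P → P and id_P ⊗ ε : P ⊗ P → P are both isomorphisms. Then (ε ⊗ id_P) = (id_P ⊗ ε) as morphisms P ⊗ P → P (modulo unitor/associator coherence), i.e. the two induced isomorphisms P ⊗ P ≅ P coincide. -/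
/-!
Write `U_X = λ_X ∘ (ε ▷ X)` and `V_X = ρ_X ∘ (X ◁ ε)`; both are natural in `X`, and
`X ◁ U_Y` and `V_X ▷ Y` both erase the middle factor of `X ⊗ P ⊗ Y`, so they agree up to
the associator. Naturality of `U` at `U_P`, cancelled against the monomorphism `U_P`, gives
`P ◁ U_P = U_P ▷ P` (up to `α`), hence `U_P ▷ P = V_P ▷ P`. Naturality of `V` then removes
the whiskering, because `V_{P ⊗ P}` is an epimorphism.
-/

open CategoryTheory MonoidalCategory

namespace CategoryTheory.MonoidalCategory

variable {C : Type*} [Category C] [MonoidalCategory C] {P : C} (ε : P ⟶ 𝟙_ C)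

def leftCounit (X : C) : P ⊗ X ⟶ X := ε ▷ X ≫ (λ_ X).hom

def rightCounit (X : C) : X ⊗ P ⟶ X := X ◁ ε ≫ (ρ_ X).hom

theorem leftCounit_naturality {X Y : C} (f : X ⟶ Y) :
    P ◁ f ≫ leftCounit ε Y = leftCounit ε X ≫ f := by
  simp only [leftCounit, whisker_exchange_assoc, leftUnitor_naturality, Category.assoc]

theorem rightCounit_naturality {X Y : C} (f : X ⟶ Y) :
    f ▷ P ≫ rightCounit ε Y = rightCounit ε X ≫ f := by
  simp only [rightCounit, ← whisker_exchange_assoc, rightUnitor_naturality, Category.assoc]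

theorem leftCounit_tensor (X Y : C) :
    leftCounit ε (X ⊗ Y) = (α_ P X Y).inv ≫ leftCounit ε X ▷ Y := by
  simp [leftCounit]

theorem whiskerLeft_leftCounit (X Y : C) :
    X ◁ leftCounit ε Y = (α_ X P Y).inv ≫ rightCounit ε X ▷ Y := by
  simp [leftCounit, rightCounit]

theorem whiskerLeft_leftCounit_self [Mono (leftCounit ε P)] :
    P ◁ leftCounit ε P = (α_ P P P).inv ≫ leftCounit ε P ▷ P := by
  rw [← cancel_mono (leftCounit ε P), leftCounit_naturality, ← leftCounit_tensor]

theorem leftCounit_whiskerRight_self [Mono (leftCounit ε P)] :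
    leftCounit ε P ▷ P = rightCounit ε P ▷ P := by
  rw [← cancel_epi (α_ P P P).inv, ← whiskerLeft_leftCounit, whiskerLeft_leftCounit_self]

theorem eq_of_whiskerRight_eq {X Y : C} [Epi (rightCounit ε X)] {f g : X ⟶ Y}
    (h : f ▷ P = g ▷ P) : f = g := by
  rw [← cancel_epi (rightCounit ε X), ← rightCounit_naturality, h, rightCounit_naturality]

instance isIso_rightCounit_tensor [IsIso (P ◁ ε)] (X : C) :
    IsIso (rightCounit ε (X ⊗ P)) := by
  rw [rightCounit, tensor_whiskerLeft]
  infer_instance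

end CategoryTheory.MonoidalCategory

/-- Let `C` be a monoidal category and `(P, ε)` a counital
idempotent: `ε : P ⟶ 𝟙` with both `ε ▷ P` and `P ◁ ε` invertible.  Then the two
induced isomorphisms `P ⊗ P ≅ P` coincide (modulo the unitors):
`(ε ▷ P) ≫ λ_P = (P ◁ ε) ≫ ρ_P`. -/
theorem stmt16 {C : Type*} [Category C] [MonoidalCategory C]
    (P : C) (ε : P ⟶ 𝟙_ C)
    (h1 : IsIso (ε ▷ P)) (h2 : IsIso (P ◁ ε)) :
    (ε ▷ P) ≫ (λ_ P).hom = (P ◁ ε) ≫ (ρ_ P).hom := by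
  have : IsIso (leftCounit ε P) := by rw [leftCounit]; infer_instance
  exact eq_of_whiskerRight_eq ε (leftCounit_whiskerRight_self ε)
end
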